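/- For every STL formula Φ over S, every trace π : ℕ → S, every time t : ℕ, and every formula ξ ∈ Θ(Φ): if (π,t) ⊨ ξ then it is not the case that (π,t) ⊨ Φ. In particular, taking t = 0, every trace satisfying some member of Θ(Φ) violates Φ. -/

import Mathlib

/-- STL formulas over a type `S` of scenes. -/
inductive STL (S : Type) : Type 1 where
  | atom : (S → Prop) → STL S
  | neg : STL S → STL S
  | conj : STL S → STL S → STL S
  | disj : STL S → STL S → STL S
  | untl : ℕ → ℕ → STL S → STL S → STL S
  | always : ℕ → ℕ → STL S → STL S
  | eventually : ℕ → ℕ → STL S → STL S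
  | next : STL S → STL S

/-- Satisfaction `(π, t) ⊨ φ`. -/
def STL.Sat {S : Type} (π : ℕ → S) : ℕ → STL S → Prop
  | t, .atom p => p (π t)
  | t, .neg φ => ¬ STL.Sat π t φ
  | t, .conj φ ψ => STL.Sat π t φ ∧ STL.Sat π t ψ
  | t, .disj φ ψ => STL.Sat π t φ ∨ STL.Sat π t ψ
  | t, .untl a b φ ψ =>
      ∃ t', t + a ≤ t' ∧ t' ≤ t + b ∧ STL.Sat π t' ψ ∧
        ∀ t'', t ≤ t'' → t'' ≤ t' → STL.Sat π t'' φ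
  | t, .always a b φ => ∀ t', t + a ≤ t' → t' ≤ t + b → STL.Sat π t' φ
  | t, .eventually a b φ => ∃ t', t + a ≤ t' ∧ t' ≤ t + b ∧ STL.Sat π t' φ
  | t, .next φ => STL.Sat π (t + 1) φ

mutual
/-- `Theta Φ`: the set of formulas describing different ways of violating `Φ`.
(In the until case, `Θ(¬φ₁ ∨ φ₂)` and `Θ(φ₁ ∨ φ₂)` are unfolded via the
defining equations `Θ(¬φ₁ ∨ φ₂) = {x ∧ y : x ∈ N(φ₁), y ∈ Θ(φ₂)}` and
`Θ(φ₁ ∨ φ₂) = {x ∧ y : x ∈ Θ(φ₁), y ∈ Θ(φ₂)}`.) -/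
def STL.Theta {S : Type} : STL S → Set (STL S)
  | .atom p => {STL.neg (STL.atom p)}
  | .conj φ ψ => STL.Theta φ ∪ STL.Theta ψ
  | .disj φ ψ => {ξ | ∃ x ∈ STL.Theta φ, ∃ y ∈ STL.Theta ψ, ξ = STL.conj x y}
  | .neg φ => STL.NSat φ
  | .untl a b φ ψ =>
      {ξ | ∃ x ∈ {ζ | ∃ u ∈ STL.NSat φ, ∃ v ∈ STL.Theta ψ, ζ = STL.conj u v},
           ∃ y ∈ {ζ | ∃ u ∈ STL.Theta φ, ∃ v ∈ STL.Theta ψ, ζ = STL.conj u v},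
           ξ = STL.untl a b x y}
      ∪ {ξ | ∃ x ∈ STL.Theta φ, ∃ y ∈ STL.Theta ψ, ξ = STL.conj x y}
  | .always a b φ => {ξ | ∃ x ∈ STL.Theta φ, ξ = STL.eventually a b x}
  | .eventually a b φ => {ξ | ∃ x ∈ STL.Theta φ, ξ = STL.always a b x}
  | .next φ => {ξ | ∃ x ∈ STL.Theta φ, ξ = STL.next x}

/-- `NSat Φ` (written `N(Φ)` in the paper): the set of formulas describing
different ways of satisfying `Φ`. -/
def STL.NSat {S : Type} : STL S → Set (STL S)
  | .atom p => {STL.atom p}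
  | .conj φ ψ => {ξ | ∃ x ∈ STL.NSat φ, ∃ y ∈ STL.NSat ψ, ξ = STL.conj x y}
  | .disj φ ψ => STL.NSat φ ∪ STL.NSat ψ
  | .neg φ => STL.Theta φ
  | .untl a b φ ψ => {ξ | ∃ x ∈ STL.NSat φ, ∃ y ∈ STL.NSat ψ, ξ = STL.untl a b x y}
  | .always a b φ => {ξ | ∃ x ∈ STL.NSat φ, ξ = STL.always a b x}
  | .eventually a b φ => {ξ | ∃ x ∈ STL.NSat φ, ξ = STL.eventually a b x}
  | .next φ => {ξ | ∃ x ∈ STL.NSat φ, ξ = STL.next x}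
end


/-! Members of `N(Φ)` entail `Φ` and members of `Θ(Φ)` refute it; the two claims are proved
together by structural recursion on `Φ`, negation swapping them. Every case is compositional
except until: suppose `x U y` holds with witness time `s'`, where `x` refutes `ψ` and `y` refutes
`φ`, and `φ U ψ` holds with witness time `s`. If `s ≤ s'`, then `x` and hence `¬ψ` holds at `s`;
otherwise `φ` must hold at `s'`, where `y` refutes it. -/

namespace STL

variable {S : Type} {π : ℕ → S}

theorem not_sat_untl_of_sat_untl {a b c d : ℕ} {φ ψ x y : STL S} {t : ℕ}
    (hx : ∀ s, Sat π s x → ¬ Sat π s ψ) (hy : ∀ s, Sat π s y → ¬ Sat π s φ)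
    (hxy : Sat π t (untl a b x y)) : ¬ Sat π t (untl c d φ ψ) := by
  rintro ⟨s, hts, -, hψ, hφ⟩
  obtain ⟨s', hts', -, hy', hx'⟩ := hxy
  rcases le_or_gt s s' with hss' | hs's
  · exact hx s (hx' s (by omega) hss') hψ
  · exact hy s' hy' (hφ s' (by omega) hs's.le)

mutual

theorem not_sat_of_mem_theta :
    ∀ {Φ ξ : STL S} {t : ℕ}, ξ ∈ Theta Φ → Sat π t ξ → ¬ Sat π t Φ
  | .atom _, _, _, rfl, h => h
  | .neg _, _, _, hξ, h => not_not_intro (sat_of_mem_nsat hξ h)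
  | .conj _ _, _, _, .inl hξ, h => fun hΦ => not_sat_of_mem_theta hξ h hΦ.1
  | .conj _ _, _, _, .inr hξ, h => fun hΦ => not_sat_of_mem_theta hξ h hΦ.2
  | .disj _ _, _, _, ⟨_, hx, _, hy, rfl⟩, ⟨h₁, h₂⟩ =>
      not_or_intro (not_sat_of_mem_theta hx h₁) (not_sat_of_mem_theta hy h₂)
  | .untl _ _ _ _, _, _, .inl ⟨_, ⟨_, _, _, hv, rfl⟩, _, ⟨_, hu, _, _, rfl⟩, rfl⟩, h =>
      not_sat_untl_of_sat_untl
        (fun _ (hx : Sat π _ (.conj _ _)) => not_sat_of_mem_theta hv hx.2)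
        (fun _ (hy : Sat π _ (.conj _ _)) => not_sat_of_mem_theta hu hy.1) h
  | .untl _ _ _ _, _, _, .inr ⟨_, hx, _, _, rfl⟩, h => fun ⟨_, _, _, _, hφ⟩ =>
      not_sat_of_mem_theta hx h.1 (hφ _ le_rfl (by omega))
  | .always _ _ _, _, _, ⟨_, hx, rfl⟩, ⟨s, hs₁, hs₂, h⟩ => fun hΦ =>
      not_sat_of_mem_theta hx h (hΦ s hs₁ hs₂)
  | .eventually _ _ _, _, _, ⟨_, hx, rfl⟩, h => fun ⟨s, hs₁, hs₂, hΦ⟩ =>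
      not_sat_of_mem_theta hx (h s hs₁ hs₂) hΦ
  | .next _, _, _, ⟨_, hx, rfl⟩, h => (not_sat_of_mem_theta hx h :)

theorem sat_of_mem_nsat :
    ∀ {Φ ξ : STL S} {t : ℕ}, ξ ∈ NSat Φ → Sat π t ξ → Sat π t Φ
  | .atom _, _, _, rfl, h => h
  | .neg _, _, _, hξ, h => not_sat_of_mem_theta hξ h
  | .conj _ _, _, _, ⟨_, hx, _, hy, rfl⟩, ⟨h₁, h₂⟩ =>
      ⟨sat_of_mem_nsat hx h₁, sat_of_mem_nsat hy h₂⟩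
  | .disj _ _, _, _, .inl hξ, h => .inl (sat_of_mem_nsat hξ h)
  | .disj _ _, _, _, .inr hξ, h => .inr (sat_of_mem_nsat hξ h)
  | .untl _ _ _ _, _, _, ⟨_, hx, _, hy, rfl⟩, ⟨s, hs₁, hs₂, hys, hx'⟩ =>
      ⟨s, hs₁, hs₂, sat_of_mem_nsat hy hys,
        fun r hr₁ hr₂ => sat_of_mem_nsat hx (hx' r hr₁ hr₂)⟩
  | .always _ _ _, _, _, ⟨_, hx, rfl⟩, h => fun s hs₁ hs₂ =>
      sat_of_mem_nsat hx (h s hs₁ hs₂)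
  | .eventually _ _ _, _, _, ⟨_, hx, rfl⟩, ⟨s, hs₁, hs₂, h⟩ =>
      ⟨s, hs₁, hs₂, sat_of_mem_nsat hx h⟩
  | .next _, _, _, ⟨_, hx, rfl⟩, h => (sat_of_mem_nsat hx h :)

end

end STL

/-- Every trace (at any time) satisfying a member of `Θ(Φ)` violates `Φ`. -/
theorem theta_sound {S : Type} (Φ : STL S) (π : ℕ → S) (t : ℕ) (ξ : STL S)
    (hξ : ξ ∈ STL.Theta Φ) (hsat : STL.Sat π t ξ) : ¬ STL.Sat π t Φ :=
  STL.not_sat_of_mem_theta hξ hsat
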